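/- arXiv:quant-ph/0602057 — 4 statements merged into one kernel-verified Lean document; each statement's English description precedes it below -/
import Mathlib

section
/- The unitarity condition is preserved under passage to the conjugate (mutually unbiased) basis: for every attack E and all l, l' ∈ I, ∑_{s ∈ I} ⟨Ē l s, Ē l' s⟩ = if l = l' then 1 else 0. -/
open scoped ComplexInnerProductSpace ComplexOrder
open Finset

namespace IDT

/-- N-bit strings. -/
abbrev Bits (N : ℕ) := Fin N → ZMod 2

/-- Bitwise dot product `i·k := ∑ n i_n k_n` (lifting bits to naturals). -/
def bdot {N : ℕ} (i k : Bits N) : ℕ := ∑ n, (i n).val * (k n).val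

/-- Eve's attack: unitarity condition on the family of vectors. -/
def Attack {N M : ℕ} (E : Bits N → Bits N → EuclideanSpace ℂ (Fin M)) : Prop :=
  ∀ i k : Bits N, (∑ j : Bits N, ⟪E i j, E k j⟫) = if i = k then 1 else 0

/-- Conjugate-basis vectors `Ē l s := 2^{-N} ∑_{i,j} (-1)^{s·j + i·l} E i j`. -/
noncomputable def Ebar {N M : ℕ} (E : Bits N → Bits N → EuclideanSpace ℂ (Fin M))
    (l s : Bits N) : EuclideanSpace ℂ (Fin M) :=
  (2 ^ N : ℂ)⁻¹ • ∑ i : Bits N, ∑ j : Bits N, ((-1 : ℂ) ^ (bdot s j + bdot i l)) • E i j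

/-- Error distribution of Bob's conjugate-basis outcome. -/
noncomputable def pbar {N M : ℕ} (E : Bits N → Bits N → EuclideanSpace ℂ (Fin M))
    (c : Bits N) : ℝ :=
  (2 ^ N : ℝ)⁻¹ * ∑ i : Bits N, ‖Ebar E i (i + c)‖ ^ 2

/-- `-x log₂ x` (with the convention `0 log₂ 0 = 0`). -/
noncomputable def ent2 (x : ℝ) : ℝ := -(x * Real.logb 2 x)

/-- A POVM on `ℂ^M` with finite outcome set `A`. -/
structure POVM (A : Type*) [Fintype A] (M : ℕ) where
  X : A → Matrix (Fin M) (Fin M) ℂ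
  posSemidef : ∀ a : A, (X a).PosSemidef
  sum_one : ∑ a : A, X a = 1

/-- Eve's outcome probability `p(α|i)`. -/
noncomputable def pOut {N M : ℕ} {A : Type*} [Fintype A]
    (E : Bits N → Bits N → EuclideanSpace ℂ (Fin M)) (P : POVM A M) (a : A) (i : Bits N) : ℝ :=
  (∑ j : Bits N, ⟪E i j, Matrix.toEuclideanLin (P.X a) (E i j)⟫).re

/-- (base-2) Shannon mutual information of a joint distribution. -/
noncomputable def mutualInfo {S T : Type*} [Fintype S] [Fintype T] (p : S → T → ℝ) : ℝ :=
  (∑ s, ent2 (∑ t, p s t)) + (∑ t, ent2 (∑ s, p s t)) - ∑ s, ∑ t, ent2 (p s t)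

/-- Eve's information gain `I(A:E[X]|b)`. -/
noncomputable def infoGain {N M : ℕ} {A : Type*} [Fintype A]
    (E : Bits N → Bits N → EuclideanSpace ℂ (Fin M)) (P : POVM A M) : ℝ :=
  mutualInfo (fun (i : Bits N) (a : A) => (2 ^ N : ℝ)⁻¹ * pOut E P a i)

/-- Elementary tensor of two Euclidean-space vectors. -/
noncomputable def tens {α β : Type*} (u : EuclideanSpace ℂ α) (v : EuclideanSpace ℂ β) :
    EuclideanSpace ℂ (α × β) :=
  (WithLp.equiv 2 ((α × β) → ℂ)).symm (fun p => u p.1 * v p.2)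

/-- Symmetrized attack vectors. -/
noncomputable def Es {N M : ℕ} (E : Bits N → Bits N → EuclideanSpace ℂ (Fin M))
    (i j : Bits N) : EuclideanSpace ℂ (Bits N × Fin M) :=
  (((Real.sqrt (2 ^ N))⁻¹ : ℝ) : ℂ) •
    ∑ m : Bits N, ((-1 : ℂ) ^ bdot m (i + j)) • tens (EuclideanSpace.single m 1) (E (i + m) (j + m))

/-- The operator `|e_m⟩⟨e_m| ⊗ X` as a matrix on `ℂ^{2^N} ⊗ ℂ^M`. -/
def projTens {N M : ℕ} (m : Bits N) (X : Matrix (Fin M) (Fin M) ℂ) :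
    Matrix (Bits N × Fin M) (Bits N × Fin M) ℂ :=
  Matrix.of fun p q => (if p.1 = m ∧ q.1 = m then 1 else 0) * X p.2 q.2

/-- Purification vectors `φ_i`. -/
noncomputable def phi {N M : ℕ} (E : Bits N → Bits N → EuclideanSpace ℂ (Fin M))
    (i : Bits N) : EuclideanSpace ℂ ((Bits N × Fin M) × Bits N) :=
  ∑ j : Bits N, tens (Es E i j) (EuclideanSpace.single (i + j) 1)

/-- Rank-one projection `|ψ⟩⟨ψ|` as a matrix. -/
noncomputable def outer {α : Type*} (ψ : EuclideanSpace ℂ α) : Matrix α α ℂ :=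
  Matrix.of fun x y => ψ x * star (ψ y)

/-- Partial trace over the second tensor factor. -/
noncomputable def ptraceSnd {α β : Type*} [Fintype β] (Θ : Matrix (α × β) (α × β) ℂ) : Matrix α α ℂ :=
  Matrix.of fun i j => ∑ b : β, Θ (i, b) (j, b)

/-- Partial trace over the first tensor factor. -/
noncomputable def ptraceFst {α β : Type*} [Fintype α] (Θ : Matrix (α × β) (α × β) ℂ) : Matrix β β ℂ :=
  Matrix.of fun x y => ∑ a : α, Θ (a, x) (a, y)

-- von Neumann entropy (base 2) of a Hermitian matrix (junk value `0` otherwise).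
open Classical in
noncomputable def vN {n : Type*} [Fintype n] [DecidableEq n] (ρ : Matrix n n ℂ) : ℝ :=
  if h : ρ.IsHermitian then ∑ i, ent2 (h.eigenvalues i) else 0

/-- Classical–quantum state `∑ i p_i |e_i⟩⟨e_i| ⊗ ρ_i`. -/
def cqState {F G : Type*} [DecidableEq F] (p : F → ℝ) (ρ : F → Matrix G G ℂ) :
    Matrix (F × G) (F × G) ℂ :=
  Matrix.of fun x y => if x.1 = y.1 then (p x.1 : ℂ) * ρ x.1 x.2 y.2 else 0

/-!
`Ē` is `E` transformed in both indices by the Hadamard matrix `H s j = (-1)^(s·j)`, whose columns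
are orthogonal of squared norm `2^N` (character orthogonality on `(ZMod 2)^N`). Transforming the
`j` index therefore multiplies `∑ s ⟪·, ·⟫` by `2^N`; the unitarity of `E` then collapses the
double sum over `i, i'` to `∑ i (-1)^(i·l) (-1)^(i·l')`, which is `2^N δ_{l l'}` again.
-/

lemma sum_zmod_two_neg_one_pow_mul (a b : ZMod 2) :
    ∑ x : ZMod 2, (-1 : ℂ) ^ (x.val * a.val) * (-1) ^ (x.val * b.val) =
      if a = b then 2 else 0 := by
  rw [show (univ : Finset (ZMod 2)) = {0, 1} from rfl]
  have h01 : ∀ x : ZMod 2, x = 0 ∨ x = 1 := by decide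
  rcases h01 a with rfl | rfl <;> rcases h01 b with rfl | rfl <;>
    norm_num [show (1 : ZMod 2).val = 1 from rfl]

lemma neg_one_pow_bdot {N : ℕ} (s j : Bits N) :
    (-1 : ℂ) ^ bdot s j = ∏ n, (-1 : ℂ) ^ ((s n).val * (j n).val) :=
  (prod_pow_eq_pow_sum _ _ _).symm

lemma sum_neg_one_pow_bdot_mul {N : ℕ} (j j' : Bits N) :
    ∑ s : Bits N, (-1 : ℂ) ^ bdot s j * (-1) ^ bdot s j' = if j = j' then 2 ^ N else 0 := by
  simp_rw [neg_one_pow_bdot, ← prod_mul_distrib]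
  rw [← Fintype.prod_sum fun n (x : ZMod 2) =>
    (-1 : ℂ) ^ (x.val * (j n).val) * (-1) ^ (x.val * (j' n).val)]
  simp_rw [sum_zmod_two_neg_one_pow_mul, Fintype.prod_ite_zero, funext_iff, prod_const, card_univ,
    Fintype.card_fin]

section InnerProductSpace

variable {V : Type*} [NormedAddCommGroup V] [InnerProductSpace ℂ V]

lemma inner_sum_smul_sum_smul {ι : Type*} (s : Finset ι) (a b : ι → ℂ) (x y : ι → V) :
    ⟪∑ i ∈ s, a i • x i, ∑ k ∈ s, b k • y k⟫ =
      ∑ i ∈ s, ∑ k ∈ s, (starRingEnd ℂ) (a i) * b k * ⟪x i, y k⟫ := by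
  rw [sum_inner]
  simp only [inner_sum, inner_smul_left, inner_smul_right, mul_assoc, mul_left_comm]

lemma sum_inner_sum_smul_of_orthogonal {S J : Type*} [Fintype S] [Fintype J] [DecidableEq J]
    (w : S → J → ℂ) (c : ℂ)
    (hw : ∀ j j', ∑ s, (starRingEnd ℂ) (w s j) * w s j' = if j = j' then c else 0)
    (F G : J → V) :
    ∑ s, ⟪∑ j, w s j • F j, ∑ j, w s j • G j⟫ = c * ∑ j, ⟪F j, G j⟫ := by
  simp_rw [inner_sum_smul_sum_smul]
  rw [sum_comm]
  simp_rw [sum_comm (s := univ (α := S)), ← sum_mul, hw, ite_mul, zero_mul, sum_ite_eq,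
    mem_univ, if_true, mul_sum]

lemma sum_inner_sum_smul_of_orthonormal {I J : Type*} [Fintype I] [Fintype J] [DecidableEq I]
    (E : I → J → V) (hE : ∀ i k, ∑ j, ⟪E i j, E k j⟫ = if i = k then 1 else 0) (a b : I → ℂ) :
    ∑ j, ⟪∑ i, a i • E i j, ∑ i, b i • E i j⟫ = ∑ i, (starRingEnd ℂ) (a i) * b i := by
  simp_rw [inner_sum_smul_sum_smul]
  rw [sum_comm]
  simp_rw [sum_comm (s := univ (α := J)), ← mul_sum, hE, mul_ite, mul_one, mul_zero, sum_ite_eq,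
    mem_univ, if_true]

end InnerProductSpace

lemma Ebar_eq_smul_sum {N M : ℕ} (E : Bits N → Bits N → EuclideanSpace ℂ (Fin M)) (l s : Bits N) :
    Ebar E l s = (2 ^ N : ℂ)⁻¹ •
      ∑ j, (-1 : ℂ) ^ bdot s j • ∑ i, (-1 : ℂ) ^ bdot i l • E i j := by
  rw [Ebar, sum_comm]
  simp_rw [smul_sum, smul_smul, pow_add]

theorem conjugate_unitarity_general {N M : ℕ}
    (E : Bits N → Bits N → EuclideanSpace ℂ (Fin M)) (hE : Attack E) (l l' : Bits N) :
    (∑ s : Bits N, ⟪Ebar E l s, Ebar E l' s⟫) = if l = l' then 1 else 0 := by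
  have hchar : ∀ j j' : Bits N, ∑ s : Bits N, (starRingEnd ℂ) ((-1 : ℂ) ^ bdot s j) *
      (-1) ^ bdot s j' = if j = j' then 2 ^ N else 0 := by
    simpa using sum_neg_one_pow_bdot_mul
  calc (∑ s, ⟪Ebar E l s, Ebar E l' s⟫)
      = (2 ^ N : ℂ)⁻¹ ^ 2 * ∑ s, ⟪∑ j, (-1 : ℂ) ^ bdot s j • ∑ i, (-1 : ℂ) ^ bdot i l • E i j,
          ∑ j, (-1 : ℂ) ^ bdot s j • ∑ i, (-1 : ℂ) ^ bdot i l' • E i j⟫ := by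
        simp only [Ebar_eq_smul_sum, inner_smul_left, inner_smul_right, map_inv₀, map_pow,
          map_ofNat, ← mul_assoc, ← mul_sum, sq]
    _ = (2 ^ N : ℂ)⁻¹ ^ 2 * (2 ^ N * ∑ i, (starRingEnd ℂ) ((-1 : ℂ) ^ bdot i l) *
          (-1) ^ bdot i l') := by
        rw [sum_inner_sum_smul_of_orthogonal _ _ hchar, sum_inner_sum_smul_of_orthonormal E hE]
    _ = if l = l' then 1 else 0 := by
        rw [hchar]
        split_ifs
        · field_simp
        · simp

/-- The unitarity condition is preserved in the conjugate (mutually unbiased) basis. -/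
theorem conjugate_unitarity {N M : ℕ} (hN : 1 ≤ N)
    (E : Bits N → Bits N → EuclideanSpace ℂ (Fin M)) (hE : Attack E) (l l' : Bits N) :
    (∑ s : Bits N, ⟪Ebar E l s, Ebar E l' s⟫) = if l = l' then 1 else 0 :=
  conjugate_unitarity_general E hE l l'

end IDT
end

section
/- The symmetrized attack vectors satisfy the unitarity condition: for every attack E and all i, k ∈ I, ∑_{j ∈ I} ⟨E^s i j, E^s k j⟩ = if i = k then 1 else 0. -/
open scoped ComplexInnerProductSpace ComplexOrder
open Finset

namespace IDT

/-!
The vectors `e_m` are orthonormal, so `⟪Es E i j, Es E k j⟫` collapses to the single sum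
`2^{-N} ∑ m, (-1)^{m·(i+k)} ⟪E (i+m) (j+m), E (k+m) (j+m)⟫`, the two signs combining because
`j + j = 0`. Summing over `j` first, the translation `j ↦ j + m` turns the inner sum into the
unitarity of `E` at `(i + m, k + m)`, which is `δ_{ik}`; for `i = k` all `2^N` signs are `+1`.
-/

lemma inner_tens {α β : Type*} [Fintype α] [Fintype β]
    (u u' : EuclideanSpace ℂ α) (v v' : EuclideanSpace ℂ β) :
    ⟪tens u v, tens u' v'⟫ = ⟪u, u'⟫ * ⟪v, v'⟫ := by
  simp only [tens, PiLp.inner_apply, RCLike.inner_apply, WithLp.equiv_symm_apply,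
    Fintype.sum_prod_type, Finset.sum_mul_sum, map_mul]
  exact Finset.sum_congr rfl fun _ _ => Finset.sum_congr rfl fun _ _ => by ring

lemma inner_sum_tens_single {α β : Type*} [Fintype α] [DecidableEq α] [Fintype β]
    (c d : α → ℂ) (v w : α → EuclideanSpace ℂ β) :
    ⟪∑ a, c a • tens (EuclideanSpace.single a 1) (v a),
      ∑ a, d a • tens (EuclideanSpace.single a 1) (w a)⟫ =
      ∑ a, (starRingEnd ℂ) (c a) * d a * ⟪v a, w a⟫ := by
  simp only [sum_inner, inner_sum, inner_smul_left, inner_smul_right, inner_tens,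
    EuclideanSpace.inner_single_left, PiLp.single_apply, map_one, one_mul, ite_mul,
    zero_mul, mul_ite, mul_zero, Finset.sum_ite_eq', Finset.mem_univ, if_true]
  exact Finset.sum_congr rfl fun _ _ => by ring

lemma bits_add_self {N : ℕ} (x : Bits N) : x + x = 0 :=
  funext fun _ => CharTwo.add_self_eq_zero _

lemma bdot_zero_right {N : ℕ} (m : Bits N) : bdot m 0 = 0 := by
  simp [bdot]

lemma natCast_bdot_add_right {N : ℕ} (m a b : Bits N) :
    ((bdot m (a + b) : ℕ) : ZMod 2) = bdot m a + bdot m b := by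
  simp only [bdot, Nat.cast_sum, Nat.cast_mul, ZMod.natCast_val, ZMod.cast_id', id,
    Pi.add_apply, mul_add, Finset.sum_add_distrib]

lemma neg_one_pow_bdot_add_right {R : Type*} [Monoid R] [HasDistribNeg R] {N : ℕ}
    (m a b : Bits N) :
    (-1 : R) ^ bdot m (a + b) = (-1) ^ bdot m a * (-1) ^ bdot m b := by
  rw [← pow_add]
  refine neg_one_pow_congr ?_
  rw [← ZMod.natCast_eq_zero_iff_even, ← ZMod.natCast_eq_zero_iff_even,
    natCast_bdot_add_right, Nat.cast_add]

lemma inner_Es {N M : ℕ} (E : Bits N → Bits N → EuclideanSpace ℂ (Fin M)) (i k j : Bits N) :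
    ⟪Es E i j, Es E k j⟫ = (2 ^ N : ℂ)⁻¹ *
      ∑ m, (-1 : ℂ) ^ bdot m (i + k) * ⟪E (i + m) (j + m), E (k + m) (j + m)⟫ := by
  have hscale : (starRingEnd ℂ) ((Real.sqrt (2 ^ N))⁻¹ : ℝ) * ((Real.sqrt (2 ^ N))⁻¹ : ℝ) =
      (2 ^ N : ℂ)⁻¹ := by
    rw [Complex.conj_ofReal, ← Complex.ofReal_mul, ← mul_inv, Real.mul_self_sqrt (by positivity)]
    push_cast; rfl
  have hsign (m : Bits N) : (starRingEnd ℂ) ((-1) ^ bdot m (i + j)) * (-1) ^ bdot m (k + j) =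
      (-1 : ℂ) ^ bdot m (i + k) := by
    rw [map_pow, map_neg, map_one, ← neg_one_pow_bdot_add_right, add_add_add_comm, bits_add_self,
      add_zero]
  rw [Es, Es, inner_smul_left, inner_smul_right, inner_sum_tens_single, ← mul_assoc, hscale]
  simp only [hsign]

lemma Attack.sum_inner_add_right {N M : ℕ} {E : Bits N → Bits N → EuclideanSpace ℂ (Fin M)}
    (hE : Attack E) (i k m : Bits N) :
    ∑ j, ⟪E (i + m) (j + m), E (k + m) (j + m)⟫ = if i = k then 1 else 0 := by
  calc ∑ j, ⟪E (i + m) (j + m), E (k + m) (j + m)⟫ = ∑ j, ⟪E (i + m) j, E (k + m) j⟫ :=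
        Equiv.sum_comp (Equiv.addRight m) fun j => ⟪E (i + m) j, E (k + m) j⟫
    _ = if i = k then 1 else 0 := by rw [hE]; simp only [add_left_inj]

theorem symmetrized_unitarity_general {N M : ℕ}
    (E : Bits N → Bits N → EuclideanSpace ℂ (Fin M)) (hE : Attack E) (i k : Bits N) :
    (∑ j : Bits N, ⟪Es E i j, Es E k j⟫) = if i = k then 1 else 0 := by
  simp_rw [inner_Es, ← Finset.mul_sum]
  rw [Finset.sum_comm]
  simp_rw [← Finset.mul_sum, hE.sum_inner_add_right]
  split_ifs with hik
  · subst hik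
    simp [bits_add_self, bdot_zero_right, Bits]
  · simp

/-- The symmetrized attack vectors satisfy the unitarity condition. -/
theorem symmetrized_unitarity {N M : ℕ} (hN : 1 ≤ N)
    (E : Bits N → Bits N → EuclideanSpace ℂ (Fin M)) (hE : Attack E) (i k : Bits N) :
    (∑ j : Bits N, ⟪Es E i j, Es E k j⟫) = if i = k then 1 else 0 :=
  symmetrized_unitarity_general E hE i k

end IDT
end

section
/- Block structure of the symmetrized Eve state: for every attack E, all i, m ∈ I, and every linear operator X on ℂ^M, ∑_{j ∈ I} ⟨E^s i j, (|e_m⟩⟨e_m| ⊗ X)(E^s i j)⟩ = 2^{-N} ∑_{j ∈ I} ⟨E (i⊕m) (j⊕m), X (E (i⊕m) (j⊕m))⟩. In particular, measuring the auxiliary register of the symmetrized state yields each outcome m with probability 2^{-N}, and the conditioned outcome statistics equal those of the original attack with input i⊕m. -/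
/-!
The operator `|e_m⟩⟨e_m| ⊗ X` only sees the `m`-th block of `E^s i j`, and that block is
`2^{-N/2} (-1)^{m·(i⊕j)} E (i⊕m) (j⊕m)`. The sign has modulus one, so the identity already holds
term by term in `j`.
-/

open scoped ComplexInnerProductSpace ComplexOrder
open Finset

namespace IDT

def slice {α β : Type*} (v : EuclideanSpace ℂ (α × β)) (a : α) : EuclideanSpace ℂ β :=
  WithLp.toLp 2 fun b => v (a, b)

lemma inner_toEuclideanLin_projTens {N M : ℕ} (m : Bits N) (X : Matrix (Fin M) (Fin M) ℂ)
    (u v : EuclideanSpace ℂ (Bits N × Fin M)) :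
    ⟪u, Matrix.toEuclideanLin (projTens m X) v⟫
      = ⟪slice u m, Matrix.toEuclideanLin X (slice v m)⟫ := by
  simp only [EuclideanSpace.inner_eq_star_dotProduct, Matrix.toLpLin_apply, dotProduct,
    Matrix.mulVec, Fintype.sum_prod_type, projTens, slice, Matrix.of_apply, ite_and, ite_mul,
    one_mul, zero_mul, Finset.sum_ite_irrel, Finset.sum_const_zero, Finset.sum_ite_eq',
    Finset.mem_univ, if_true, Pi.star_apply]

lemma slice_Es {N M : ℕ} (E : Bits N → Bits N → EuclideanSpace ℂ (Fin M)) (i j m : Bits N) :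
    slice (Es E i j) m
      = ((((Real.sqrt (2 ^ N))⁻¹ : ℝ) : ℂ) * (-1 : ℂ) ^ bdot m (i + j)) • E (i + m) (j + m) := by
  ext b
  simp [slice, Es, tens, Finset.sum_apply, mul_assoc]

lemma inner_smul_map_smul {𝕜 V : Type*} [RCLike 𝕜] [NormedAddCommGroup V] [InnerProductSpace 𝕜 V]
    (T : V →ₗ[𝕜] V) (a : 𝕜) (x : V) :
    inner 𝕜 (a • x) (T (a • x)) = ((‖a‖ ^ 2 : ℝ) : 𝕜) * inner 𝕜 x (T x) := by
  rw [map_smul, inner_smul_left, inner_smul_right, ← mul_assoc, RCLike.conj_mul, RCLike.ofReal_pow]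

lemma norm_sq_invSqrt_mul_neg_one_pow (N k : ℕ) :
    ‖(((Real.sqrt (2 ^ N))⁻¹ : ℝ) : ℂ) * (-1 : ℂ) ^ k‖ ^ 2 = ((2 : ℝ) ^ N)⁻¹ := by
  rw [norm_mul, norm_pow, norm_neg, norm_one, one_pow, mul_one, Complex.norm_real,
    Real.norm_eq_abs, sq_abs, inv_pow, Real.sq_sqrt (by positivity)]

theorem symmetrized_block_structure_general {N M : ℕ}
    (E : Bits N → Bits N → EuclideanSpace ℂ (Fin M)) (i m : Bits N)
    (X : Matrix (Fin M) (Fin M) ℂ) :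
    (∑ j : Bits N, ⟪Es E i j, Matrix.toEuclideanLin (projTens m X) (Es E i j)⟫)
      = (2 ^ N : ℂ)⁻¹ *
        ∑ j : Bits N, ⟪E (i + m) (j + m), Matrix.toEuclideanLin X (E (i + m) (j + m))⟫ := by
  rw [Finset.mul_sum]
  refine Finset.sum_congr rfl fun j _ => ?_
  rw [inner_toEuclideanLin_projTens, slice_Es, inner_smul_map_smul,
    norm_sq_invSqrt_mul_neg_one_pow]
  push_cast
  rfl

/-- Block structure of the symmetrized Eve state. -/
theorem symmetrized_block_structure {N M : ℕ} (hN : 1 ≤ N)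
    (E : Bits N → Bits N → EuclideanSpace ℂ (Fin M)) (hE : Attack E) (i m : Bits N)
    (X : Matrix (Fin M) (Fin M) ℂ) :
    (∑ j : Bits N, ⟪Es E i j, Matrix.toEuclideanLin (projTens m X) (Es E i j)⟫)
      = (2 ^ N : ℂ)⁻¹ *
        ∑ j : Bits N, ⟪E (i + m) (j + m), Matrix.toEuclideanLin X (E (i + m) (j + m))⟫ :=
  symmetrized_block_structure_general E i m X

end IDT
end

section
/- Quantum mutual entropy of a classical–quantum state equals the Holevo quantity: let F be a finite type, (p_i)_{i ∈ F} a probability distribution, and (ρ_i)_{i ∈ F} density matrices on ℂ^d (positive semidefinite Hermitian with trace 1). For the classical–quantum state Θ := ∑_{i ∈ F} p_i |e_i⟩⟨e_i| ⊗ ρ_i on ℂ^{|F|} ⊗ ℂ^d, with partial traces Θ|_R on ℂ^{|F|} and Θ|_E on ℂ^d, one has S(Θ|_R) + S(Θ|_E) − S(Θ) = S(∑_i p_i ρ_i) − ∑_i p_i S(ρ_i). -/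
/-!
Θ is block diagonal with blocks `p i • ρ i`, so its eigenvalues are the products `p i * λ i k`,
where `λ i ·` are the eigenvalues of `ρ i` (eigenvalue multisets are compared through
characteristic polynomials). Since `∑ k, λ i k = tr ρ i = 1`, the identity
`η(x y) = x η(y) + y η(x)` for `η(x) = -x log₂ x` gives `S(Θ) = H(p) + ∑ i, p i S(ρ i)`,
while `Θ|_R = diag p` has entropy `H(p)` and `Θ|_E = ∑ i, p i ρ i`.
-/

open scoped ComplexInnerProductSpace ComplexOrder
open Finset

open Polynomial

namespace Matrix

theorem charpoly_blockDiagonal {R n o : Type*} [CommRing R] [Fintype n] [DecidableEq n]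
    [Fintype o] [DecidableEq o] (M : o → Matrix n n R) :
    (blockDiagonal M).charpoly = ∏ k, (M k).charpoly := by
  have : charmatrix (blockDiagonal M) = blockDiagonal fun k => charmatrix (M k) := by
    ext ⟨i, k⟩ ⟨j, k'⟩
    rcases eq_or_ne k k' with rfl | hk
    · by_cases hij : i = j <;> simp [blockDiagonal_apply, hij]
    · simp [blockDiagonal_apply, hk]
  simp only [Matrix.charpoly, this, det_blockDiagonal]

theorem IsHermitian.charpoly_real_smul {n : Type*} [Fintype n] [DecidableEq n]
    {A : Matrix n n ℂ} (hA : A.IsHermitian) (c : ℝ) :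
    ((c : ℂ) • A).charpoly = ∏ i, (X - C ((c * hA.eigenvalues i : ℝ) : ℂ)) := by
  conv_lhs => rw [hA.spectral_theorem, Unitary.conjStarAlgAut_apply, ← smul_mul_assoc,
    ← mul_smul_comm, charpoly_mul_comm, ← mul_assoc]
  simp [charpoly_diagonal, ← diagonal_smul]

theorem IsHermitian.sum_comp_eigenvalues_of_charpoly_eq {n m : Type*} [Fintype n]
    [DecidableEq n] [Fintype m] {A : Matrix n n ℂ} (hA : A.IsHermitian) {d : m → ℝ}
    (h : A.charpoly = ∏ i, (X - C (d i : ℂ))) (f : ℝ → ℝ) :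
    ∑ i, f (hA.eigenvalues i) = ∑ i, f (d i) := by
  have hroots : univ.val.map hA.eigenvalues = univ.val.map d := by
    apply Multiset.map_injective Complex.ofReal_injective
    have := hA.roots_charpoly_eq_eigenvalues
    rw [h, roots_prod _ _ (by simp [prod_ne_zero_iff, X_sub_C_ne_zero])] at this
    simpa [Multiset.map_map] using this.symm
  calc ∑ i, f (hA.eigenvalues i) = ((univ.val.map hA.eigenvalues).map f).sum := by
        rw [Multiset.map_map]; rfl
    _ = ∑ i, f (d i) := by rw [hroots, Multiset.map_map]; rfl

end Matrix

namespace IDT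

open Matrix

lemma ent2_mul (x y : ℝ) : ent2 (x * y) = x * ent2 y + y * ent2 x := by
  rcases eq_or_ne x 0 with rfl | hx
  · simp [ent2]
  rcases eq_or_ne y 0 with rfl | hy
  · simp [ent2]
  simp only [ent2, Real.logb, Real.log_mul hx hy]
  ring

section VonNeumann

variable {n m : Type*} [Fintype n] [DecidableEq n] [Fintype m]

theorem vN_eq_sum_ent2_eigenvalues {A : Matrix n n ℂ} (hA : A.IsHermitian) :
    vN A = ∑ i, ent2 (hA.eigenvalues i) := by
  rw [vN, dif_pos hA]

theorem vN_eq_sum_ent2_of_charpoly_eq {A : Matrix n n ℂ} (hA : A.IsHermitian) {d : m → ℝ}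
    (h : A.charpoly = ∏ i, (X - C (d i : ℂ))) : vN A = ∑ i, ent2 (d i) := by
  rw [vN_eq_sum_ent2_eigenvalues hA, hA.sum_comp_eigenvalues_of_charpoly_eq h]

theorem vN_diagonal (d : n → ℝ) : vN (diagonal fun i => (d i : ℂ)) = ∑ i, ent2 (d i) :=
  vN_eq_sum_ent2_of_charpoly_eq (isHermitian_diagonal_of_self_adjoint _ (by ext; simp))
    (charpoly_diagonal _)

end VonNeumann

section ClassicalQuantum

variable {F G : Type*} [DecidableEq F] (p : F → ℝ) (ρ : F → Matrix G G ℂ)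

theorem ptraceSnd_cqState [Fintype G] (htr : ∀ i, (ρ i).trace = 1) :
    ptraceSnd (cqState p ρ) = diagonal fun i => (p i : ℂ) := by
  ext i j
  rcases eq_or_ne i j with rfl | hij
  · simpa [ptraceSnd, cqState, ← mul_sum, trace] using congrArg ((p i : ℂ) * ·) (htr i)
  · simp [ptraceSnd, cqState, hij]

theorem ptraceFst_cqState [Fintype F] : ptraceFst (cqState p ρ) = ∑ i, (p i : ℂ) • ρ i := by
  ext x y
  simp [ptraceFst, cqState, Matrix.sum_apply]

theorem cqState_eq_reindex_blockDiagonal :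
    cqState p ρ = reindex (Equiv.prodComm G F) (Equiv.prodComm G F)
      (blockDiagonal fun i => (p i : ℂ) • ρ i) := by
  ext ⟨i, a⟩ ⟨j, b⟩
  simp [cqState, blockDiagonal_apply]

theorem isHermitian_cqState (hρ : ∀ i, (ρ i).IsHermitian) : (cqState p ρ).IsHermitian := by
  ext ⟨i, a⟩ ⟨j, b⟩
  rcases eq_or_ne i j with rfl | hij
  · simpa [cqState] using congrArg (fun A => (p i : ℂ) * A a b) (hρ i).eq
  · simp [cqState, hij, Ne.symm hij]

theorem charpoly_cqState [Fintype F] [Fintype G] [DecidableEq G]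
    (hρ : ∀ i, (ρ i).IsHermitian) :
    (cqState p ρ).charpoly =
      ∏ x : F × G, (X - C ((p x.1 * (hρ x.1).eigenvalues x.2 : ℝ) : ℂ)) := by
  rw [cqState_eq_reindex_blockDiagonal, charpoly_reindex, charpoly_blockDiagonal,
    Fintype.prod_prod_type]
  exact prod_congr rfl fun i _ => (hρ i).charpoly_real_smul (p i)

theorem vN_cqState [Fintype F] [Fintype G] [DecidableEq G] (hρ : ∀ i, (ρ i).IsHermitian)
    (htr : ∀ i, (ρ i).trace = 1) :
    vN (cqState p ρ) = ∑ i, (p i * vN (ρ i) + ent2 (p i)) := by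
  rw [vN_eq_sum_ent2_of_charpoly_eq (isHermitian_cqState p ρ hρ) (charpoly_cqState p ρ hρ),
    Fintype.sum_prod_type]
  refine sum_congr rfl fun i _ => ?_
  have hsum : ∑ k, (hρ i).eigenvalues k = 1 := by
    have h := (hρ i).trace_eq_sum_eigenvalues
    rw [htr i, ← RCLike.ofReal_sum, ← RCLike.ofReal_one, RCLike.ofReal_inj] at h
    exact h.symm
  simp only [ent2_mul, sum_add_distrib, ← mul_sum, ← sum_mul, hsum, one_mul,
    vN_eq_sum_ent2_eigenvalues (hρ i)]

end ClassicalQuantum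

theorem cq_mutual_entropy_eq_holevo_general {F : Type*} [Fintype F] [DecidableEq F] {d : ℕ}
    (p : F → ℝ)
    (ρ : F → Matrix (Fin d) (Fin d) ℂ) (hρ : ∀ i, (ρ i).PosSemidef)
    (htr : ∀ i, (ρ i).trace = 1) :
    vN (ptraceSnd (cqState p ρ)) + vN (ptraceFst (cqState p ρ)) - vN (cqState p ρ)
      = vN (∑ i, (p i : ℂ) • ρ i) - ∑ i, p i * vN (ρ i) := by
  rw [ptraceSnd_cqState p ρ htr, vN_diagonal, ptraceFst_cqState,
    vN_cqState p ρ (fun i => (hρ i).1) htr, sum_add_distrib]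
  ring

/-- Quantum mutual entropy of a classical–quantum state equals the Holevo quantity. -/
theorem cq_mutual_entropy_eq_holevo {F : Type*} [Fintype F] [DecidableEq F] {d : ℕ}
    (p : F → ℝ) (hp : ∀ i, 0 ≤ p i) (hp1 : ∑ i, p i = 1)
    (ρ : F → Matrix (Fin d) (Fin d) ℂ) (hρ : ∀ i, (ρ i).PosSemidef)
    (htr : ∀ i, (ρ i).trace = 1) :
    vN (ptraceSnd (cqState p ρ)) + vN (ptraceFst (cqState p ρ)) - vN (cqState p ρ)
      = vN (∑ i, (p i : ℂ) • ρ i) - ∑ i, p i * vN (ρ i) :=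
  cq_mutual_entropy_eq_holevo_general p ρ hρ htr

end IDT
end
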